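/- arXiv:2508.21264 — 5 statements merged into one kernel-verified Lean document; each statement's English description precedes it below -/
import Mathlib

section
/- Let G be a group with elements τ, σ, h_i, h_j satisfying σ² = 1, σ = [h_i, h_j] (where [a,b] := a⁻¹b⁻¹ab), and τ^(h_j⁻¹) = τ^σ (where a^b := b a b⁻¹). Then τ^(h_i) commutes with h_j, i.e. [τ^(h_i), h_j] = 1. -/
/-! Since `σ = [h_i, h_j]`, we have `h_j⁻¹ h_i = h_i σ h_j⁻¹`, so conjugating `τ^(h_i)` by `h_j⁻¹`
amounts to conjugating `τ^(h_j⁻¹) = τ^σ` by `h_i σ`, which gives `τ^(h_i σ²) = τ^(h_i)`. -/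

section

variable {G : Type*} [Group G]

theorem inv_mul_inv_mul_mul_eq_one_of_inv_mul_mul_eq {a b : G} (h : b⁻¹ * a * b = a) :
    a⁻¹ * b⁻¹ * a * b = 1 := by
  rw [mul_assoc a⁻¹, mul_assoc a⁻¹, h, inv_mul_cancel]

theorem inv_mul_conj_mul_of_eq_commutator {τ σ hi hj : G} (hcomm : σ = hi⁻¹ * hj⁻¹ * hi * hj)
    (hτ : hj⁻¹ * τ * hj = σ * τ * σ⁻¹) :
    hj⁻¹ * (hi * τ * hi⁻¹) * hj = hi * (σ * σ) * τ * (σ * σ)⁻¹ * hi⁻¹ :=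
  calc hj⁻¹ * (hi * τ * hi⁻¹) * hj
      = (hi * σ * hj⁻¹) * τ * (hi * σ * hj⁻¹)⁻¹ := by rw [hcomm]; group
    _ = hi * σ * (hj⁻¹ * τ * hj) * σ⁻¹ * hi⁻¹ := by group
    _ = hi * (σ * σ) * τ * (σ * σ)⁻¹ * hi⁻¹ := by rw [hτ]; group

end

theorem tau_conj_commutes {G : Type*} [Group G] (τ σ hi hj : G)
    (hσ : σ ^ 2 = 1) (hcomm : σ = hi⁻¹ * hj⁻¹ * hi * hj)
    (hτ : hj⁻¹ * τ * hj = σ * τ * σ⁻¹) :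
    (hi * τ * hi⁻¹)⁻¹ * hj⁻¹ * (hi * τ * hi⁻¹) * hj = 1 := by
  apply inv_mul_inv_mul_mul_eq_one_of_inv_mul_mul_eq
  rw [inv_mul_conj_mul_of_eq_commutator hcomm hτ, ← sq, hσ, inv_one, mul_one, mul_one]
end

section
/- Let G be a group with elements σ, h_i, h_j satisfying σ² = 1, (σ^(h_j⁻¹) * σ)³ = 1, σ^(h_i⁻¹) = σ^(h_j⁻¹), and σ = [h_i, h_j]. Then h_j commutes with σ^(h_i²), i.e. [h_j, h_i² σ h_i⁻²] = 1. -/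
/-!
Conjugation by `hj` (in the form `x ↦ hj⁻¹ x hj`) sends `hi` to `hi σ`, by `σ = [hi, hj]`, and
`σ` to `t = hi⁻¹ σ hi`. Since `(hi σ)² = hi² (t σ)`, it sends `hi² σ hi⁻²` to
`hi² ((t σ) t (t σ)⁻¹) hi⁻²`, and the involutions `t`, `σ` satisfy the braid relation
`(t σ) t (t σ)⁻¹ = σ` because `(t σ)³ = 1`.
-/

section
variable {G : Type*} [Group G]

theorem mul_mul_mul_inv_eq_of_mul_pow_three {a b : G} (ha : a ^ 2 = 1) (hb : b ^ 2 = 1)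
    (hab : (a * b) ^ 3 = 1) : a * b * a * (a * b)⁻¹ = b := by
  have ha' : a⁻¹ = a := inv_eq_of_mul_eq_one_right (by rwa [← sq])
  have hb' : b⁻¹ = b := inv_eq_of_mul_eq_one_right (by rwa [← sq])
  calc a * b * a * (a * b)⁻¹ = a * b * a * (b * a) := by rw [mul_inv_rev, ha', hb']
    _ = (a * b) ^ 3 * b⁻¹ := by rw [pow_succ, sq]; group
    _ = b := by rw [hab, one_mul, hb']

theorem mul_sq_mul_conj_mul_inv_eq_sq_conj {g σ : G} (hσ : σ ^ 2 = 1)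
    (hbraid : ((g⁻¹ * σ * g) * σ) ^ 3 = 1) :
    (g * σ) ^ 2 * (g⁻¹ * σ * g) * ((g * σ) ^ 2)⁻¹ = g ^ 2 * σ * (g ^ 2)⁻¹ := by
  set t := g⁻¹ * σ * g with ht
  have ht2 : t ^ 2 = 1 := by
    rw [show t ^ 2 = g⁻¹ * σ ^ 2 * g by rw [ht, sq, sq]; group, hσ]; group
  have hsq : (g * σ) ^ 2 = g ^ 2 * (t * σ) := by rw [ht, sq, sq]; group
  calc (g * σ) ^ 2 * t * ((g * σ) ^ 2)⁻¹ = g ^ 2 * (t * σ * t * (t * σ)⁻¹) * (g ^ 2)⁻¹ := by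
        rw [hsq]; group
    _ = g ^ 2 * σ * (g ^ 2)⁻¹ := by rw [mul_mul_mul_inv_eq_of_mul_pow_three ht2 hσ hbraid]

end

theorem hj_commutes_sigma_hi_sq {G : Type*} [Group G] (σ hi hj : G)
    (h1 : σ ^ 2 = 1)
    (h2 : ((hj⁻¹ * σ * hj) * σ) ^ 3 = 1)
    (h3 : hi⁻¹ * σ * hi = hj⁻¹ * σ * hj)
    (h4 : σ = hi⁻¹ * hj⁻¹ * hi * hj) :
    hj⁻¹ * (hi ^ 2 * σ * (hi ^ 2)⁻¹)⁻¹ * hj * (hi ^ 2 * σ * (hi ^ 2)⁻¹) = 1 := by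
  set x := hi ^ 2 * σ * (hi ^ 2)⁻¹
  have hconj_hi : hj⁻¹ * hi * hj = hi * σ := by rw [h4]; group
  have hfixed : hj⁻¹ * x * hj = x := by
    calc hj⁻¹ * x * hj
        = (hj⁻¹ * hi * hj) ^ 2 * (hj⁻¹ * σ * hj) * ((hj⁻¹ * hi * hj) ^ 2)⁻¹ := by
          simp only [x, sq]; group
      _ = x := by
        rw [hconj_hi, ← h3]
        exact mul_sq_mul_conj_mul_inv_eq_sq_conj h1 (by rwa [h3])
  calc hj⁻¹ * x⁻¹ * hj * x = (hj⁻¹ * x * hj)⁻¹ * x := by group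
    _ = 1 := by rw [hfixed, inv_mul_cancel]
end

section
/- Let G be a group with elements σ, h_i, h_j such that σ = [h_i, h_j], [h_j, σ^(h_i²)] = 1, and [σ, σ^(h_iᵏ)] = 1 for all integers k ≥ 2. Then [h_j, σ^(h_iᵏ)] = 1 for all k ≥ 2, where σ^(h_iᵏ) := h_iᵏ σ h_i⁻ᵏ. -/
/-!
Write `τₖ := hᵢᵏ σ hᵢ⁻ᵏ` and induct on `k ≥ 2`. Since `σ = [hᵢ, hⱼ]`, conjugating `hⱼ` by `hᵢ⁻¹`
gives `hⱼ σ⁻¹`, which commutes with `τₖ` because both `hⱼ` and `σ` do. Conjugating back by `hᵢ`,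
`hⱼ` commutes with `hᵢ τₖ hᵢ⁻¹ = τₖ₊₁`.
-/

section

variable {G : Type*} [Group G]

theorem inv_mul_inv_mul_mul_eq_one_iff_commute (a b : G) :
    a⁻¹ * b⁻¹ * a * b = 1 ↔ Commute a b := by
  rw [← Commute.inv_inv_iff, ← commutatorElement_eq_one_iff_commute, commutatorElement_def,
    inv_inv, inv_inv]

theorem conj_pow_succ (a x : G) (n : ℕ) :
    a ^ (n + 1) * x * (a ^ (n + 1))⁻¹ = a * (a ^ n * x * (a ^ n)⁻¹) * a⁻¹ := by
  rw [pow_succ']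
  group

theorem Commute.conj_right_of_commutator {a b σ t : G} (hσ : σ = a⁻¹ * b⁻¹ * a * b)
    (hb : Commute b t) (hσt : Commute σ t) : Commute b (a * t * a⁻¹) := by
  have hconj : a⁻¹ * b * a = b * σ⁻¹ := by
    rw [hσ]
    group
  have key : Commute (a⁻¹ * b * a) t := hconj ▸ hb.mul_left hσt.inv_left
  simpa only [mul_assoc, mul_inv_cancel_left, mul_inv_cancel, mul_one] using key.conj a

end

theorem hj_commutes_sigma_hi_pow {G : Type*} [Group G] (σ hi hj : G)
    (h1 : σ = hi⁻¹ * hj⁻¹ * hi * hj)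
    (h2 : hj⁻¹ * (hi ^ 2 * σ * (hi ^ 2)⁻¹)⁻¹ * hj * (hi ^ 2 * σ * (hi ^ 2)⁻¹) = 1)
    (h3 : ∀ k : ℕ, 2 ≤ k →
      σ⁻¹ * (hi ^ k * σ * (hi ^ k)⁻¹)⁻¹ * σ * (hi ^ k * σ * (hi ^ k)⁻¹) = 1) :
    ∀ k : ℕ, 2 ≤ k →
      hj⁻¹ * (hi ^ k * σ * (hi ^ k)⁻¹)⁻¹ * hj * (hi ^ k * σ * (hi ^ k)⁻¹) = 1 := by
  simp only [inv_mul_inv_mul_mul_eq_one_iff_commute] at h2 h3 ⊢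
  intro k hk
  induction k, hk using Nat.le_induction with
  | base => exact h2
  | succ n hn ih =>
    rw [conj_pow_succ]
    exact ih.conj_right_of_commutator h1 (h3 n hn)
end

section
/- Let G be a group with elements η, σ, h_i, h_j satisfying σ = [h_i, h_j], η^(h_i) = η^(σ * σ^(h_i)), and η^(h_i⁻¹) = η^(h_j⁻¹). Then η^(h_i²) commutes with h_j, i.e. [η^(h_i²), h_j] = 1. -/
/-! Left multiplication by `hj * hi` turns `σ * σ^hi` into `hi ^ 2 * hj * hi⁻¹`. Conjugating the
hypothesis `η^hi = η^(σ σ^hi)` by `hj * hi` therefore gives `(η^(hi²))^hj = ((η^(hi⁻¹))^hj)^(hi²)`,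
and `η^(hi⁻¹) = η^(hj⁻¹)` makes `(η^(hi⁻¹))^hj = η`. -/

theorem mul_mul_commutator_mul_conj_commutator {G : Type*} [Group G] (a b : G) :
    b * a * (a⁻¹ * b⁻¹ * a * b * (a * (a⁻¹ * b⁻¹ * a * b) * a⁻¹)) = a ^ 2 * b * a⁻¹ := by
  rw [sq]; group

theorem eta_hi_sq_commutes_hj {G : Type*} [Group G] (η σ hi hj : G)
    (h1 : σ = hi⁻¹ * hj⁻¹ * hi * hj)
    (h2 : hi * η * hi⁻¹ =
      (σ * (hi * σ * hi⁻¹)) * η * (σ * (hi * σ * hi⁻¹))⁻¹)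
    (h3 : hi⁻¹ * η * hi = hj⁻¹ * η * hj) :
    (hi ^ 2 * η * (hi ^ 2)⁻¹)⁻¹ * hj⁻¹ * (hi ^ 2 * η * (hi ^ 2)⁻¹) * hj = 1 := by
  subst h1
  set c := hi⁻¹ * hj⁻¹ * hi * hj * (hi * (hi⁻¹ * hj⁻¹ * hi * hj) * hi⁻¹)
  have hconj : hj * (hi ^ 2 * η * (hi ^ 2)⁻¹) * hj⁻¹ = hi ^ 2 * η * (hi ^ 2)⁻¹ :=
    calc hj * (hi ^ 2 * η * (hi ^ 2)⁻¹) * hj⁻¹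
        = hj * hi * (hi * η * hi⁻¹) * (hj * hi)⁻¹ := by rw [sq]; group
      _ = hj * hi * c * η * (hj * hi * c)⁻¹ := by rw [h2]; group
      _ = hi ^ 2 * hj * hi⁻¹ * η * (hi ^ 2 * hj * hi⁻¹)⁻¹ := by
        rw [mul_mul_commutator_mul_conj_commutator]
      _ = hi ^ 2 * (hj * (hi⁻¹ * η * hi) * hj⁻¹) * (hi ^ 2)⁻¹ := by group
      _ = hi ^ 2 * η * (hi ^ 2)⁻¹ := by rw [h3]; group
  have hcomm : Commute (hi ^ 2 * η * (hi ^ 2)⁻¹) hj := (mul_inv_eq_iff_eq_mul.mp hconj).symm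
  simpa [commutatorElement_def] using commutatorElement_eq_one_iff_commute.mpr hcomm.inv_inv
end

section
/- Fix r ≥ 1 and let f, g be permutations of Fin r × ℕ that are eventual translations (there exist N_f, N_g ∈ ℕ and t_f, t_g : Fin r → ℤ with f(i,n) = (i, n + t_f i) for n ≥ N_f and g(i,n) = (i, n + t_g i) for n ≥ N_g). Then the commutator f⁻¹ g⁻¹ f g has finite support, i.e. it fixes all but finitely many points of Fin r × ℕ. -/
/-!
Beyond a threshold both `f ∘ g` and `g ∘ f` translate the ray `{i} × ℕ` by `tf i + tg i`,
so they agree there; and the commutator `f⁻¹ g⁻¹ f g` fixes exactly the points where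
`f ∘ g` and `g ∘ f` agree. Finitely many rays, each with a finite exceptional segment.
-/

def IsTranslationBeyond {ι : Type*} (N : ι → ℕ) (t : ι → ℤ) (f : ι × ℕ → ι × ℕ) : Prop :=
  ∀ (i : ι) (n : ℕ), N i ≤ n → (f (i, n)).1 = i ∧ ((f (i, n)).2 : ℤ) = (n : ℤ) + t i

namespace IsTranslationBeyond

variable {ι : Type*} {f g : ι × ℕ → ι × ℕ} {Nf Ng : ι → ℕ} {tf tg : ι → ℤ}

theorem apply_eq_mk_snd (hf : IsTranslationBeyond Nf tf f) {i : ι} {n : ℕ} (hn : Nf i ≤ n) :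
    f (i, n) = (i, (f (i, n)).2) :=
  Prod.ext (hf i n hn).1 rfl

theorem comp (hf : IsTranslationBeyond Nf tf f) (hg : IsTranslationBeyond Ng tg g) :
    IsTranslationBeyond (fun i => Ng i + Nf i + (tg i).natAbs) (tg + tf) (f ∘ g) := by
  intro i n (hn : Ng i + Nf i + (tg i).natAbs ≤ n)
  obtain ⟨-, hgn⟩ := hg i n (by omega)
  have hfn := hf i (g (i, n)).2 (by omega)
  rw [Function.comp_apply, hg.apply_eq_mk_snd (by omega), hfn.2, hgn, Pi.add_apply, add_assoc]
  exact ⟨hfn.1, rfl⟩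

theorem apply_eq_of_le (hf : IsTranslationBeyond Nf tf f) (hg : IsTranslationBeyond Ng tf g)
    {i : ι} {n : ℕ} (hn : Nf i + Ng i ≤ n) : f (i, n) = g (i, n) := by
  obtain ⟨hf₁, hf₂⟩ := hf i n (by omega)
  obtain ⟨hg₁, hg₂⟩ := hg i n (by omega)
  exact Prod.ext (hf₁.trans hg₁.symm) (by omega)

end IsTranslationBeyond

theorem Equiv.Perm.inv_mul_inv_mul_mul_apply_eq_self_iff {α : Type*} (f g : Equiv.Perm α)
    (x : α) : (f⁻¹ * g⁻¹ * f * g) x = x ↔ f (g x) = g (f x) := by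
  simp only [Equiv.Perm.mul_apply, Equiv.Perm.inv_eq_iff_eq]

theorem Set.finite_of_forall_exists_notMem_of_le {ι : Type*} [Finite ι] {s : Set (ι × ℕ)}
    (h : ∀ i, ∃ N, ∀ n, N ≤ n → (i, n) ∉ s) : s.Finite := by
  choose N hN using h
  refine (Set.finite_iUnion fun i => (Set.finite_Iio (N i)).image (Prod.mk i)).subset ?_
  rintro ⟨i, n⟩ hx
  exact Set.mem_iUnion.2 ⟨i, n, not_le.1 fun hn => hN i n hn hx, rfl⟩

theorem commutator_of_eventual_translations_finite_support_general (r : ℕ)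
    (f g : Equiv.Perm (Fin r × ℕ))
    (Nf Ng : ℕ) (tf tg : Fin r → ℤ)
    (hf : ∀ (i : Fin r) (n : ℕ), Nf ≤ n →
      (f (i, n)).1 = i ∧ ((f (i, n)).2 : ℤ) = (n : ℤ) + tf i)
    (hg : ∀ (i : Fin r) (n : ℕ), Ng ≤ n →
      (g (i, n)).1 = i ∧ ((g (i, n)).2 : ℤ) = (n : ℤ) + tg i) :
    {x : Fin r × ℕ | (f⁻¹ * g⁻¹ * f * g) x ≠ x}.Finite := by
  have hf' : IsTranslationBeyond (fun _ => Nf) tf f := hf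
  have hg' : IsTranslationBeyond (fun _ => Ng) tg g := hg
  have hfg := hf'.comp hg'
  have hgf := hg'.comp hf'
  rw [add_comm tf] at hgf
  refine Set.finite_of_forall_exists_notMem_of_le fun i =>
    ⟨Ng + Nf + (tg i).natAbs + (Nf + Ng + (tf i).natAbs), fun n hn => ?_⟩
  rw [Set.mem_ofPred_eq, not_not, Equiv.Perm.inv_mul_inv_mul_mul_apply_eq_self_iff]
  exact hfg.apply_eq_of_le hgf hn

theorem commutator_of_eventual_translations_finite_support (r : ℕ) (hr : 1 ≤ r)
    (f g : Equiv.Perm (Fin r × ℕ))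
    (Nf Ng : ℕ) (tf tg : Fin r → ℤ)
    (hf : ∀ (i : Fin r) (n : ℕ), Nf ≤ n →
      (f (i, n)).1 = i ∧ ((f (i, n)).2 : ℤ) = (n : ℤ) + tf i)
    (hg : ∀ (i : Fin r) (n : ℕ), Ng ≤ n →
      (g (i, n)).1 = i ∧ ((g (i, n)).2 : ℤ) = (n : ℤ) + tg i) :
    {x : Fin r × ℕ | (f⁻¹ * g⁻¹ * f * g) x ≠ x}.Finite :=
  commutator_of_eventual_translations_finite_support_general r f g Nf Ng tf tg hf hg
end
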